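/- Let ab be an edge of a finite simple graph G. With N_{a\b} = N_a \ {b}, S_{a\b} = N_{a\b} ∪ {a}, N_{b\a} = N_b \ {a}, S_{b\a} = N_{b\a} ∪ {b}, we have α(N_{a\b}, S_{b\a}) = α(N_{b\a}, S_{a\b}), i.e., the edge count in 'scheme 2' is symmetric in a and b. -/

import Mathlib

open Finset

/-! Splitting off the extra vertex of the second set, each side becomes
`α(N_{a\b}, N_{b\a})` (resp. its transpose) plus the number of common neighbours of `a` and `b`;
since adjacency is symmetric, so is `α`. -/

namespace SimpleGraph

variable {V : Type*} (G : SimpleGraph V) [DecidableRel G.Adj]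

/-- The paper's `α(S, T)`. -/
def edgeCount (s t : Finset V) : ℕ :=
  ∑ x ∈ s, ∑ y ∈ t, if G.Adj x y then 1 else 0

theorem edgeCount_comm (s t : Finset V) : G.edgeCount s t = G.edgeCount t s := by
  unfold edgeCount
  rw [sum_comm]
  simp only [adj_comm]

theorem edgeCount_insert_right [DecidableEq V] (s t : Finset V) {b : V} (hb : b ∉ t) :
    G.edgeCount s (insert b t) = G.edgeCount s {b} + G.edgeCount s t := by
  simp only [edgeCount, sum_insert hb, sum_singleton, sum_add_distrib]

theorem edgeCount_singleton_right (s : Finset V) (b : V) :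
    G.edgeCount s {b} = #{x ∈ s | G.Adj x b} := by
  simp only [edgeCount, sum_singleton (fun y => if G.Adj _ y then 1 else 0), sum_boole,
    Nat.cast_id]

variable [Fintype V] [DecidableEq V]

theorem edgeCount_neighborFinset_sdiff_singleton (a b : V) :
    G.edgeCount (G.neighborFinset a \ {b}) {b} =
      #(G.neighborFinset a ∩ G.neighborFinset b) := by
  rw [edgeCount_singleton_right]
  congr 1
  ext x
  simp only [mem_filter, mem_sdiff, mem_singleton, mem_inter, mem_neighborFinset]
  exact ⟨fun ⟨⟨hax, _⟩, hxb⟩ => ⟨hax, hxb.symm⟩,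
    fun ⟨hax, hbx⟩ => ⟨⟨hax, hbx.ne'⟩, hbx.symm⟩⟩

theorem self_notMem_neighborFinset_sdiff (a b : V) :
    a ∉ G.neighborFinset a \ {b} := by
  simp

end SimpleGraph

theorem alpha_scheme2_symm_general {V : Type*} [Fintype V] [DecidableEq V]
    (G : SimpleGraph V) [DecidableRel G.Adj] (a b : V) :
    (∑ x ∈ G.neighborFinset a \ {b}, ∑ y ∈ insert b (G.neighborFinset b \ {a}),
        (if G.Adj x y then (1 : ℕ) else 0)) =
      (∑ x ∈ G.neighborFinset b \ {a}, ∑ y ∈ insert a (G.neighborFinset a \ {b}),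
        (if G.Adj x y then (1 : ℕ) else 0)) := by
  change G.edgeCount _ (insert b _) = G.edgeCount _ (insert a _)
  rw [G.edgeCount_insert_right _ _ (G.self_notMem_neighborFinset_sdiff b a),
    G.edgeCount_insert_right _ _ (G.self_notMem_neighborFinset_sdiff a b),
    G.edgeCount_neighborFinset_sdiff_singleton, G.edgeCount_neighborFinset_sdiff_singleton,
    inter_comm, G.edgeCount_comm (G.neighborFinset a \ {b})]

/-- scheme 2 edge count is symmetric in a and b:
    α(N_{a\b}, S_{b\a}) = α(N_{b\a}, S_{a\b}). -/
theorem alpha_scheme2_symm {V : Type*} [Fintype V] [DecidableEq V]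
    (G : SimpleGraph V) [DecidableRel G.Adj] (a b : V) (hab : G.Adj a b) :
    (∑ x ∈ G.neighborFinset a \ {b}, ∑ y ∈ insert b (G.neighborFinset b \ {a}),
        (if G.Adj x y then (1 : ℕ) else 0)) =
      (∑ x ∈ G.neighborFinset b \ {a}, ∑ y ∈ insert a (G.neighborFinset a \ {b}),
        (if G.Adj x y then (1 : ℕ) else 0)) :=
  alpha_scheme2_symm_general G a b
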